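/- arXiv:1706.05644 — 2 statements merged into one kernel-verified Lean document; each statement's English description precedes it below -/
import Mathlib

section
/- Let q : {α−1+s : s = 0,…,b+1} → [0,∞), let λ ∈ (0,1) satisfy min_{t ∈ I} G(t,s) ≥ λ·G(s+α−1,s) for every integer s ∈ {0,1,…,b+1}, and assume Σ_{s ∈ S} λ·G(s+α−1,s)·q(s+α−1) > 0, where S := { integer s : (b+α)/4 ≤ s ≤ 3(b+α)/4 }, so that γ* := ( Σ_{s ∈ S} λ·G(s+α−1,s)·q(s+α−1) )^{−1} is defined. Let r₁ > 0, let f : [0,∞) → [0,∞) satisfy f(x) ≥ γ*·r₁ for all x ∈ [0,r₁], and let y : T_b → ℝ satisfy 0 ≤ y(s+α−1) ≤ r₁ for all s ∈ {0,…,b+1}. Then for every t ∈ I, Σ_{s=0}^{b+1} G(t,s)·q(s+α−1)·f(y(s+α−1)) ≥ r₁. -/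
/-!
On the diagonal `t = s + α - 1` the subtracted term of `G` is `Γ(α-1)/Γ(0) = 0`, so `G(s+α-1, s)`
is a quotient of positive Gamma values. The hypothesis `G(t,s) ≥ λ·G(s+α-1,s)` then makes `G`
nonnegative on `I`, and bounding `f` below by `γ*·r₁` on the terms indexed by `S` and by `0` on the
others leaves `γ*·r₁·Σ_{s∈S} λ·G(s+α-1,s)·q(s) = r₁`.
-/

/-- Falling power `x^[y] = Γ(x+1)/Γ(x-y+1)`; it equals 0 when `x-y+1` is a
nonpositive integer since `Real.Gamma` vanishes there (and division by zero is zero). -/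
noncomputable def fp (x y : ℝ) : ℝ := Real.Gamma (x + 1) / Real.Gamma (x - y + 1)

/-- The Green function `G(t,s)` of the discrete fractional boundary value problem,
for `t ∈ T_b` (a real number) and an integer `s ∈ {0,1,…,b+1}`. -/
noncomputable def G (α : ℝ) (b : ℕ) (t : ℝ) (s : ℕ) : ℝ :=
  if (s : ℝ) ≤ t - α + 1 then
    1 / Real.Gamma α *
      (fp t (α - 1) * fp (α + b - s) (α - 1) / fp (α + b + 1) (α - 1) - fp (t - s - 1) (α - 1))
  else
    1 / Real.Gamma α * (fp t (α - 1) * fp (α + b - s) (α - 1) / fp (α + b + 1) (α - 1))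

lemma fp_pos {x y : ℝ} (h1 : 0 < x + 1) (h2 : 0 < x - y + 1) : 0 < fp x y :=
  div_pos (Real.Gamma_pos_of_pos h1) (Real.Gamma_pos_of_pos h2)

lemma fp_eq_zero_of_sub_add_one_eq_zero {x y : ℝ} (h : x - y + 1 = 0) : fp x y = 0 := by
  rw [fp, h, Real.Gamma_zero, div_zero]

lemma G_diag_pos {α : ℝ} {b s : ℕ} (hα : 0 < α) (hs : s ≤ b + 1) :
    0 < G α b ((s : ℝ) + α - 1) s := by
  have hsb : (s : ℝ) ≤ b + 1 := by exact_mod_cast hs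
  have hs₀ : (0 : ℝ) ≤ s := s.cast_nonneg
  rw [G, if_pos (by linarith),
    fp_eq_zero_of_sub_add_one_eq_zero (by ring : (s : ℝ) + α - 1 - s - 1 - (α - 1) + 1 = 0),
    sub_zero]
  have h₁ : 0 < fp ((s : ℝ) + α - 1) (α - 1) := fp_pos (by linarith) (by linarith)
  have h₂ : 0 < fp (α + b - s) (α - 1) := fp_pos (by linarith) (by linarith)
  have h₃ : 0 < fp (α + b + 1) (α - 1) := fp_pos (by linarith) (by linarith)
  have hΓ : 0 < Real.Gamma α := Real.Gamma_pos_of_pos hα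
  positivity

lemma le_sum_of_le_mul_inv_sum {ι : Type*} {S T : Finset ι} (hST : S ⊆ T) {w g : ι → ℝ} {r : ℝ}
    (hw : ∑ s ∈ S, w s ≠ 0) (hg : ∀ s ∈ T, 0 ≤ g s)
    (hle : ∀ s ∈ S, w s * ((∑ i ∈ S, w i)⁻¹ * r) ≤ g s) :
    r ≤ ∑ s ∈ T, g s :=
  calc r = (∑ s ∈ S, w s) * ((∑ i ∈ S, w i)⁻¹ * r) := by rw [mul_inv_cancel_left₀ hw]
    _ = ∑ s ∈ S, w s * ((∑ i ∈ S, w i)⁻¹ * r) := Finset.sum_mul _ _ _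
    _ ≤ ∑ s ∈ S, g s := Finset.sum_le_sum hle
    _ ≤ ∑ s ∈ T, g s := Finset.sum_le_sum_of_subset_of_nonneg hST fun s hs _ => hg s hs

theorem statement8_general (α : ℝ) (b : ℕ) (hα1 : 1 < α)
    (q : ℕ → ℝ) (hq : ∀ s : ℕ, s ≤ b + 1 → 0 ≤ q s)
    (lam : ℝ) (hlam : lam ∈ Set.Ioo (0 : ℝ) 1)
    (hG : ∀ s : ℕ, s ≤ b + 1 →
      ∀ k : ℕ, k ≤ b + 1 → (b + α) / 4 ≤ α - 1 + k → α - 1 + k ≤ 3 * (b + α) / 4 →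
        lam * G α b ((s : ℝ) + α - 1) s ≤ G α b (α - 1 + k) s)
    (hS : 0 < ∑ s ∈ (Finset.range (b + 2)).filter
        (fun s : ℕ => (b + α) / 4 ≤ (s : ℝ) ∧ (s : ℝ) ≤ 3 * (b + α) / 4),
        lam * G α b ((s : ℝ) + α - 1) s * q s)
    (r₁ : ℝ)
    (f : ℝ → ℝ) (hf0 : ∀ x : ℝ, 0 ≤ x → 0 ≤ f x)
    (hf : ∀ x : ℝ, 0 ≤ x → x ≤ r₁ →
      (∑ s ∈ (Finset.range (b + 2)).filter
          (fun s : ℕ => (b + α) / 4 ≤ (s : ℝ) ∧ (s : ℝ) ≤ 3 * (b + α) / 4),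
          lam * G α b ((s : ℝ) + α - 1) s * q s)⁻¹ * r₁ ≤ f x)
    (y : ℕ → ℝ) (hy : ∀ s : ℕ, s ≤ b + 1 → 0 ≤ y (s + 1) ∧ y (s + 1) ≤ r₁) :
    ∀ k : ℕ, k ≤ b + 1 → (b + α) / 4 ≤ α - 1 + k → α - 1 + k ≤ 3 * (b + α) / 4 →
      r₁ ≤ ∑ s ∈ Finset.range (b + 2), G α b (α - 1 + k) s * q s * f (y (s + 1)) := by
  -- `y (s + 1)` encodes `y(s + α - 1)` and `q s` encodes `q(s + α - 1)`.
  intro k hk hk₁ hk₂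
  have hGt : ∀ s, s ≤ b + 1 → 0 ≤ G α b (α - 1 + k) s := fun s hs =>
    (mul_pos hlam.1 (G_diag_pos (by linarith) hs)).le.trans (hG s hs k hk hk₁ hk₂)
  refine le_sum_of_le_mul_inv_sum (Finset.filter_subset _ _) hS.ne' (fun s hs => ?_) fun s hs => ?_
  · have hs : s ≤ b + 1 := Nat.lt_succ_iff.mp (Finset.mem_range.mp hs)
    exact mul_nonneg (mul_nonneg (hGt s hs) (hq s hs)) (hf0 _ (hy s hs).1)
  · have hs : s ≤ b + 1 := Nat.lt_succ_iff.mp (Finset.mem_range.mp (Finset.mem_filter.mp hs).1)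
    exact mul_le_mul_of_nonneg
      (mul_le_mul_of_nonneg_right (hG s hs k hk hk₁ hk₂) (hq s hs)) (hf _ (hy s hs).1 (hy s hs).2)
      (mul_nonneg (mul_pos hlam.1 (G_diag_pos (by linarith) hs)).le (hq s hs)) (hf0 _ (hy s hs).1)

/-- Lower-bound estimate used in the existence proof: under hypothesis `(H₁)`,
`f(x) ≥ γ*·r₁` on `[0,r₁]`, where
`γ* = (Σ_{s ∈ S} λ·G(s+α-1,s)·q(s+α-1))⁻¹` and
`S = {s ∈ ℕ : (b+α)/4 ≤ s ≤ 3(b+α)/4}`, one has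
`Σ_{s=0}^{b+1} G(t,s)·q(s+α-1)·f(y(s+α-1)) ≥ r₁` for all `t ∈ I`.
Here `y k` stands for `y(α-2+k)` and `q s` stands for `q(α-1+s)`. -/
theorem statement8 (α : ℝ) (b : ℕ) (hα1 : 1 < α) (hα2 : α ≤ 2) (hb : 2 ≤ b)
    (q : ℕ → ℝ) (hq : ∀ s : ℕ, s ≤ b + 1 → 0 ≤ q s)
    (lam : ℝ) (hlam : lam ∈ Set.Ioo (0 : ℝ) 1)
    (hG : ∀ s : ℕ, s ≤ b + 1 →
      ∀ k : ℕ, k ≤ b + 1 → (b + α) / 4 ≤ α - 1 + k → α - 1 + k ≤ 3 * (b + α) / 4 →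
        lam * G α b ((s : ℝ) + α - 1) s ≤ G α b (α - 1 + k) s)
    (hS : 0 < ∑ s ∈ (Finset.range (b + 2)).filter
        (fun s : ℕ => (b + α) / 4 ≤ (s : ℝ) ∧ (s : ℝ) ≤ 3 * (b + α) / 4),
        lam * G α b ((s : ℝ) + α - 1) s * q s)
    (r₁ : ℝ) (hr₁ : 0 < r₁)
    (f : ℝ → ℝ) (hf0 : ∀ x : ℝ, 0 ≤ x → 0 ≤ f x)
    (hf : ∀ x : ℝ, 0 ≤ x → x ≤ r₁ →
      (∑ s ∈ (Finset.range (b + 2)).filter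
          (fun s : ℕ => (b + α) / 4 ≤ (s : ℝ) ∧ (s : ℝ) ≤ 3 * (b + α) / 4),
          lam * G α b ((s : ℝ) + α - 1) s * q s)⁻¹ * r₁ ≤ f x)
    (y : ℕ → ℝ) (hy : ∀ s : ℕ, s ≤ b + 1 → 0 ≤ y (s + 1) ∧ y (s + 1) ≤ r₁) :
    ∀ k : ℕ, k ≤ b + 1 → (b + α) / 4 ≤ α - 1 + k → α - 1 + k ≤ 3 * (b + α) / 4 →
      r₁ ≤ ∑ s ∈ Finset.range (b + 2), G α b (α - 1 + k) s * q s * f (y (s + 1)) :=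
  statement8_general α b hα1 q hq lam hlam hG hS r₁ f hf0 hf y hy
end

section
/- Let q : {α−1+s : s = 0,…,b+1} → [0,∞) with Σ_{s=0}^{b+1} G(s+α−1,s)·q(s+α−1) > 0, so that γ := ( Σ_{s=0}^{b+1} G(s+α−1,s)·q(s+α−1) )^{−1} is defined. Let r₂ > 0, let f : [0,∞) → [0,∞) satisfy f(x) ≤ γ·r₂ for all x ∈ [0,r₂], and let y : T_b → ℝ satisfy 0 ≤ y(s+α−1) ≤ r₂ for all s ∈ {0,…,b+1}. Then for every t ∈ {α−1+k : k = 0,…,b+1}, Σ_{s=0}^{b+1} G(t,s)·q(s+α−1)·f(y(s+α−1)) ≤ r₂. -/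
theorem fp_nonneg {x y : ℝ} (hx : 0 ≤ x + 1) (hxy : 0 ≤ x - y + 1) : 0 ≤ fp x y :=
  div_nonneg (Real.Gamma_nonneg_of_nonneg hx) (Real.Gamma_nonneg_of_nonneg hxy)

theorem fp_sub_one_self (y : ℝ) : fp (y - 1) y = 0 := by
  simp [fp]

theorem fp_add_one_sub_fp {x : ℝ} (y : ℝ) (hx : x + 1 ≠ 0) :
    fp (x + 1) y - fp x y = y * fp x (y - 1) := by
  obtain ⟨u, rfl⟩ : ∃ u, y = x + 1 - u := ⟨x - y + 1, by ring⟩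
  rw [fp, fp, fp, show x + 1 - (x + 1 - u) + 1 = u + 1 by ring,
    show x - (x + 1 - u - 1) + 1 = u + 1 by ring, show x - (x + 1 - u) + 1 = u by ring,
    Real.Gamma_add_one hx]
  -- `Γ` vanishes at the nonpositive integers, where the divisions below are junk.
  rcases eq_or_ne u 0 with rfl | hu
  · simp
  rw [Real.Gamma_add_one hu]
  rcases eq_or_ne (Real.Gamma u) 0 with hΓ | hΓ
  · simp [hΓ]
  field_simp

theorem monotone_fp_add_nat {x y : ℝ} (hy : 0 ≤ y) (hx : 0 < x + 1) (hxy : 0 ≤ x - y + 2) :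
    Monotone fun n : ℕ => fp (x + n) y := by
  refine monotone_nat_of_le_succ fun n => ?_
  have hn : (0 : ℝ) ≤ n := n.cast_nonneg
  have hstep := fp_add_one_sub_fp y (x := x + n) (by linarith)
  have hfp : 0 ≤ fp (x + n) (y - 1) := fp_nonneg (by linarith) (by linarith)
  push_cast
  rw [← add_assoc]
  nlinarith

theorem antitone_fp_add_nat {x y : ℝ} (hy : y ≤ 0) (hx : 0 < x + 1) :
    Antitone fun n : ℕ => fp (x + n) y := by
  refine antitone_nat_of_succ_le fun n => ?_
  have hn : (0 : ℝ) ≤ n := n.cast_nonneg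
  have hstep := fp_add_one_sub_fp y (x := x + n) (by linarith)
  have hfp : 0 ≤ fp (x + n) (y - 1) := fp_nonneg (by linarith) (by linarith)
  push_cast
  rw [← add_assoc]
  nlinarith

noncomputable def greenWeight (α : ℝ) (b s : ℕ) : ℝ :=
  fp (α + b - s) (α - 1) / fp (α + b + 1) (α - 1)

section Green

variable {α : ℝ} {b s : ℕ}

theorem monotone_fp_alpha_sub_one (hα : 1 ≤ α) :
    Monotone fun n : ℕ => fp (α - 1 + n) (α - 1) :=
  monotone_fp_add_nat (by linarith) (by linarith) (by linarith)

theorem greenWeight_nonneg (hα : 1 ≤ α) (hs : s ≤ b + 1) : 0 ≤ greenWeight α b s := by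
  have hsb : (s : ℝ) ≤ b + 1 := by exact_mod_cast hs
  have hb : (0 : ℝ) ≤ b := b.cast_nonneg
  exact div_nonneg (fp_nonneg (by linarith) (by linarith)) (fp_nonneg (by linarith) (by linarith))

theorem greenWeight_le_one (hα : 1 ≤ α) (hs : s ≤ b + 1) : greenWeight α b s ≤ 1 := by
  have hb : (0 : ℝ) ≤ b := b.cast_nonneg
  refine div_le_one_of_le₀ ?_ (fp_nonneg (by linarith) (by linarith))
  have h := monotone_fp_alpha_sub_one hα (show b + 1 - s ≤ b + 2 by omega)
  simp only [Nat.cast_sub hs] at h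
  push_cast at h
  convert h using 2 <;> ring

theorem G_of_lt {k : ℕ} (h : k < s) :
    G α b (α - 1 + k) s = 1 / Real.Gamma α * (fp (α - 1 + k) (α - 1) * greenWeight α b s) := by
  have hks : (k : ℝ) < s := by exact_mod_cast h
  rw [G, if_neg (by linarith), greenWeight, mul_div_assoc]

theorem G_add (j : ℕ) :
    G α b (α - 1 + ↑(s + j)) s =
      1 / Real.Gamma α *
        (fp (α - 1 + ↑(s + j)) (α - 1) * greenWeight α b s - fp (α - 2 + j) (α - 1)) := by
  have hj : (0 : ℝ) ≤ j := j.cast_nonneg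
  rw [G, if_pos (by push_cast; linarith), greenWeight, mul_div_assoc,
    show α - 1 + ((s + j : ℕ) : ℝ) - s - 1 = α - 2 + j by push_cast; ring]

theorem G_diag :
    G α b (s + α - 1) s = 1 / Real.Gamma α * (fp (α - 1 + s) (α - 1) * greenWeight α b s) := by
  have h := G_add (α := α) (b := b) (s := s) 0
  rw [show α - 2 + ((0 : ℕ) : ℝ) = α - 1 - 1 by push_cast; ring, fp_sub_one_self, sub_zero,
    Nat.add_zero] at h
  rw [← h, show (s : ℝ) + α - 1 = α - 1 + s by ring]

theorem G_diag_nonneg (hα : 1 ≤ α) (hs : s ≤ b + 1) : 0 ≤ G α b (s + α - 1) s := by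
  have hΓ : 0 < Real.Gamma α := Real.Gamma_pos_of_pos (by linarith)
  have hs0 : (0 : ℝ) ≤ s := s.cast_nonneg
  have hfp : 0 ≤ fp (α - 1 + s) (α - 1) := fp_nonneg (by linarith) (by linarith)
  rw [G_diag]
  exact mul_nonneg (by positivity) (mul_nonneg hfp (greenWeight_nonneg hα hs))

theorem antitone_G_add (hα1 : 1 < α) (hα2 : α ≤ 2) (hs : s ≤ b + 1) :
    Antitone fun j : ℕ =>
      fp (α - 1 + ↑(s + j)) (α - 1) * greenWeight α b s - fp (α - 2 + j) (α - 1) := by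
  refine antitone_nat_of_succ_le fun j => ?_
  have hj : (0 : ℝ) ≤ j := j.cast_nonneg
  have hc1 := greenWeight_le_one hα1.le hs
  have hgrow := fp_add_one_sub_fp (α - 1) (x := α - 1 + ↑(s + j)) (by push_cast; linarith)
  have hlag := fp_add_one_sub_fp (α - 1) (x := α - 2 + j) (by linarith)
  have hdecr := antitone_fp_add_nat (x := α - 2 + j) (y := α - 1 - 1) (by linarith)
    (by linarith) (Nat.zero_le (s + 1))
  have hpos : 0 ≤ fp (α - 1 + ↑(s + j)) (α - 1 - 1) :=
    fp_nonneg (by push_cast; linarith) (by linarith)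
  simp only [Nat.cast_zero, add_zero] at hdecr
  rw [show α - 2 + j + ((s + 1 : ℕ) : ℝ) = α - 1 + ↑(s + j) by push_cast; ring] at hdecr
  rw [show ((s + (j + 1) : ℕ) : ℝ) = ↑(s + j) + 1 by push_cast; ring,
    show α - 2 + ((j + 1 : ℕ) : ℝ) = α - 2 + j + 1 by push_cast; ring, ← add_assoc]
  nlinarith [mul_le_mul hc1 hdecr hpos zero_le_one]

theorem G_le_G_diag (hα1 : 1 < α) (hα2 : α ≤ 2) (hs : s ≤ b + 1) (k : ℕ) :
    G α b (α - 1 + k) s ≤ G α b (s + α - 1) s := by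
  rw [G_diag]
  rcases lt_or_ge k s with hks | hsk
  · rw [G_of_lt hks]
    gcongr
    · exact greenWeight_nonneg hα1.le hs
    · exact monotone_fp_alpha_sub_one hα1.le hks.le
  · obtain ⟨j, rfl⟩ := Nat.exists_eq_add_of_le hsk
    rw [G_add]
    gcongr
    have h := antitone_G_add hα1 hα2 hs (Nat.zero_le j)
    simpa [fp_sub_one_self, show α - 2 = α - 1 - 1 by ring] using h

end Green

theorem statement9_general (α : ℝ) (b : ℕ) (hα1 : 1 < α) (hα2 : α ≤ 2)
    (q : ℕ → ℝ) (hq : ∀ s : ℕ, s ≤ b + 1 → 0 ≤ q s)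
    (hγ : 0 < ∑ s ∈ Finset.range (b + 2), G α b ((s : ℝ) + α - 1) s * q s)
    (r₂ : ℝ)
    (f : ℝ → ℝ) (hf0 : ∀ x : ℝ, 0 ≤ x → 0 ≤ f x)
    (hf : ∀ x : ℝ, 0 ≤ x → x ≤ r₂ →
      f x ≤ (∑ s ∈ Finset.range (b + 2), G α b ((s : ℝ) + α - 1) s * q s)⁻¹ * r₂)
    (y : ℕ → ℝ) (hy : ∀ s : ℕ, s ≤ b + 1 → 0 ≤ y (s + 1) ∧ y (s + 1) ≤ r₂) :
    ∀ k : ℕ, k ≤ b + 1 →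
      ∑ s ∈ Finset.range (b + 2), G α b (α - 1 + k) s * q s * f (y (s + 1)) ≤ r₂ := by
  intro k _
  set S := ∑ s ∈ Finset.range (b + 2), G α b ((s : ℝ) + α - 1) s * q s
  have hterm : ∀ s ∈ Finset.range (b + 2),
      G α b (α - 1 + k) s * q s * f (y (s + 1)) ≤ G α b ((s : ℝ) + α - 1) s * q s * (S⁻¹ * r₂) := by
    intro s hs
    have hs : s ≤ b + 1 := Nat.lt_succ_iff.mp (Finset.mem_range.mp hs)
    obtain ⟨hy0, hyr⟩ := hy s hs
    exact mul_le_mul (mul_le_mul_of_nonneg_right (G_le_G_diag hα1 hα2 hs k) (hq s hs))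
      (hf _ hy0 hyr) (hf0 _ hy0) (mul_nonneg (G_diag_nonneg hα1.le hs) (hq s hs))
  calc ∑ s ∈ Finset.range (b + 2), G α b (α - 1 + k) s * q s * f (y (s + 1))
      ≤ ∑ s ∈ Finset.range (b + 2), G α b ((s : ℝ) + α - 1) s * q s * (S⁻¹ * r₂) :=
        Finset.sum_le_sum hterm
    _ = r₂ := by rw [← Finset.sum_mul, ← mul_assoc, mul_inv_cancel₀ hγ.ne', one_mul]

/-- Upper-bound estimate used in the existence proof: under hypothesis `(H₂)`,
`f(x) ≤ γ·r₂` on `[0,r₂]`, where `γ = (Σ_{s=0}^{b+1} G(s+α-1,s)·q(s+α-1))⁻¹`,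
one has `Σ_{s=0}^{b+1} G(t,s)·q(s+α-1)·f(y(s+α-1)) ≤ r₂` for all
`t ∈ {α-1+k : k = 0,…,b+1}`.
Here `y k` stands for `y(α-2+k)` and `q s` stands for `q(α-1+s)`. -/
theorem statement9 (α : ℝ) (b : ℕ) (hα1 : 1 < α) (hα2 : α ≤ 2) (hb : 2 ≤ b)
    (q : ℕ → ℝ) (hq : ∀ s : ℕ, s ≤ b + 1 → 0 ≤ q s)
    (hγ : 0 < ∑ s ∈ Finset.range (b + 2), G α b ((s : ℝ) + α - 1) s * q s)
    (r₂ : ℝ) (hr₂ : 0 < r₂)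
    (f : ℝ → ℝ) (hf0 : ∀ x : ℝ, 0 ≤ x → 0 ≤ f x)
    (hf : ∀ x : ℝ, 0 ≤ x → x ≤ r₂ →
      f x ≤ (∑ s ∈ Finset.range (b + 2), G α b ((s : ℝ) + α - 1) s * q s)⁻¹ * r₂)
    (y : ℕ → ℝ) (hy : ∀ s : ℕ, s ≤ b + 1 → 0 ≤ y (s + 1) ∧ y (s + 1) ≤ r₂) :
    ∀ k : ℕ, k ≤ b + 1 →
      ∑ s ∈ Finset.range (b + 2), G α b (α - 1 + k) s * q s * f (y (s + 1)) ≤ r₂ :=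
  statement9_general α b hα1 hα2 q hq hγ r₂ f hf0 hf y hy
end
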